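/- For each n ≥ 1, the reliability polynomial of the Schreier graph Γ_n of the Grigorchuk group is R(Γ_n, p) = p^{2^n − 1} (2 − p)^{2^{n−1} − 1}. -/

import Mathlib

/-- A finite multigraph on a vertex set `V`: a finite edge type together with an
incidence map assigning to each edge its unordered pair of endpoints
(loops and parallel edges are allowed). -/
structure Multigraph (V : Type) where
  /-- the type of edges -/
  Edge : Type
  /-- the edge type is finite -/
  fintypeEdge : Fintype Edge
  /-- equality of edges is decidable -/
  decEqEdge : DecidableEq Edge
  /-- the unordered pair of endpoints of an edge -/
  inc : Edge → Sym2 V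

attribute [instance] Multigraph.fintypeEdge Multigraph.decEqEdge

namespace Multigraph

variable {V : Type} [Fintype V] [DecidableEq V]

/-- The simple graph underlying the spanning subgraph of `G` with edge set `A`:
two distinct vertices are adjacent iff some edge in `A` has them as endpoints. -/
def toSimple (G : Multigraph V) (A : Finset G.Edge) : SimpleGraph V :=
  SimpleGraph.fromRel fun u v => ∃ e ∈ A, G.inc e = s(u, v)

/-- `G.comps A` is the number `k(A)` of connected components of the spanning
subgraph of `G` with edge set `A`. -/
noncomputable def comps (G : Multigraph V) (A : Finset G.Edge) : ℕ :=
  Nat.card (G.toSimple A).ConnectedComponent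

/-- The rank `r(A) = |V| - k(A)` of the spanning subgraph with edge set `A`. -/
noncomputable def rk (G : Multigraph V) (A : Finset G.Edge) : ℕ :=
  Fintype.card V - G.comps A

/-- The nullity `n(A) = |E(A)| - r(A)` of the spanning subgraph with edge set `A`. -/
noncomputable def nullity (G : Multigraph V) (A : Finset G.Edge) : ℕ :=
  A.card - G.rk A

/-- The Tutte polynomial
`T(G; x, y) = ∑_{A ⊆ E} (x - 1) ^ (r(E) - r(A)) * (y - 1) ^ n(A)`,
as a function of two real variables. -/
noncomputable def tutte (G : Multigraph V) (x y : ℝ) : ℝ :=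
  ∑ A ∈ (Finset.univ : Finset G.Edge).powerset,
    (x - 1) ^ (G.rk Finset.univ - G.rk A) * (y - 1) ^ (G.nullity A)

/-- The reliability polynomial `R(G, p)`: the probability that, when each edge is
independently active with probability `p`, every pair of vertices is joined by a
path of active edges (i.e. the spanning subgraph of active edges is connected). -/
noncomputable def reliability (G : Multigraph V) (p : ℝ) : ℝ :=
  ∑ A ∈ (Finset.univ : Finset G.Edge).powerset,
    if G.comps A = 1 then p ^ A.card * (1 - p) ^ (Fintype.card G.Edge - A.card) else 0

/-- The complexity `τ(G)`: the number of spanning subtrees of `G`, i.e. spanning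
subgraphs which are connected and have `|V| - 1` edges. -/
noncomputable def treeCount (G : Multigraph V) : ℕ :=
  Nat.card {A : Finset G.Edge // G.comps A = 1 ∧ A.card + 1 = Fintype.card V}

/-- The number of connected spanning subgraphs of `G`. -/
noncomputable def connCount (G : Multigraph V) : ℕ :=
  Nat.card {A : Finset G.Edge // G.comps A = 1}

/-- The number of spanning forests of `G`: spanning subgraphs containing no cycle,
i.e. with `|E(A)| = |V| - k(A)` (zero nullity). -/
noncomputable def forestCount (G : Multigraph V) : ℕ :=
  Nat.card {A : Finset G.Edge // A.card + G.comps A = Fintype.card V}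

/-- `σ` is an orientation of `G` if it assigns to every edge an ordered pair of
vertices whose underlying unordered pair is the pair of endpoints of the edge. -/
def IsOrientation (G : Multigraph V) (σ : G.Edge → V × V) : Prop :=
  ∀ e, s((σ e).1, (σ e).2) = G.inc e

/-- The number of acyclic orientations of `G`: orientations admitting no directed
cycle. -/
noncomputable def acyclicOrientationCount (G : Multigraph V) : ℕ :=
  Nat.card {σ : G.Edge → V × V //
    G.IsOrientation σ ∧ ∀ v : V, ¬ Relation.TransGen (fun u w => ∃ e, σ e = (u, w)) v v}

/-- A proper coloring of `G`: the two endpoints of every edge receive distinct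
colors. -/
def ProperColoring (G : Multigraph V) {α : Type} (c : V → α) : Prop :=
  ∀ e, ¬ (Sym2.map c (G.inc e)).IsDiag

/-- The number of proper colorings of `G` with `k` colors (the value `χ(G, k)` of
the chromatic polynomial at the natural number `k`). -/
noncomputable def chromCount (G : Multigraph V) (k : ℕ) : ℕ :=
  Nat.card {c : V → Fin k // G.ProperColoring c}

end Multigraph

/-- The left endpoint of the `i`-th gap of a path on `2^n` vertices. -/
def leftV (n : ℕ) (i : Fin (2 ^ n - 1)) : Fin (2 ^ n) :=
  ⟨i.val, by have := i.isLt; omega⟩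

/-- The right endpoint of the `i`-th gap of a path on `2^n` vertices. -/
def rightV (n : ℕ) (i : Fin (2 ^ n - 1)) : Fin (2 ^ n) :=
  ⟨i.val + 1, by have := i.isLt; omega⟩

/-- The vertex carrying the `j`-th extra loop: the two outermost vertices carry
two extra loops each. -/
def endV (n : ℕ) (j : Fin 4) : Fin (2 ^ n) :=
  if j.val < 2 then ⟨0, by positivity⟩
  else
    ⟨2 ^ n - 1, by
      have h : 0 < 2 ^ n := by positivity
      omega⟩

/-- The level-`n` Schreier graph `Γ_n` of the Grigorchuk group, as an unlabelled
multigraph: the path-shaped cactus on `2^n` vertices obtained by alternating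
`2^(n-1)` bridges (single edges, at even gaps) and `2^(n-1) - 1` cycles of length
two (double edges, at odd gaps), with one loop at every vertex and two extra loops
at each of the two outermost vertices (which therefore carry three loops each). -/
def grig (n : ℕ) : Multigraph (Fin (2 ^ n)) where
  Edge := (Σ i : Fin (2 ^ n - 1), Fin (if Even i.val then 1 else 2)) ⊕ (Fin (2 ^ n) ⊕ Fin 4)
  fintypeEdge := inferInstance
  decEqEdge := inferInstance
  inc := fun e =>
    match e with
    | Sum.inl ⟨i, _⟩ => s(leftV n i, rightV n i)
    | Sum.inr (Sum.inl v) => s(v, v)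
    | Sum.inr (Sum.inr j) => s(endV n j, endV n j)

/-!
`Γ_n` is a path whose consecutive vertices are joined by a single edge or a double edge,
decorated with loops. A spanning subgraph is connected exactly when every link of the path
keeps at least one of its edges; loops play no role. The links use disjoint sets of edges, so
these events are independent and `R(Γ_n, p) = ∏ (1 - (1 - p) ^ mᵢ)` over the multiplicities
`mᵢ` of the links: `2^(n-1)` single links give `p` each and `2^(n-1) - 1` double links give
`1 - (1 - p)^2 = p (2 - p)` each.
-/

open Finset

section BernoulliWeight

variable {R : Type*} [CommRing R] {α β : Type*} [Fintype α] [DecidableEq α]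
  [Fintype β] [DecidableEq β]

/-- The probability that the set of active elements is exactly `A` when each element is active
independently with probability `p`. -/
def bernoulliWeight (p : R) (A : Finset α) : R := p ^ #A * (1 - p) ^ #Aᶜ

lemma bernoulliWeight_eq_prod (p : R) (A : Finset α) :
    bernoulliWeight p A = ∏ a, if a ∈ A then p else 1 - p := by
  rw [Finset.prod_ite, Finset.prod_const, Finset.prod_const, filter_mem_eq_inter, univ_inter,
    ← compl_filter, filter_mem_eq_inter, univ_inter, bernoulliWeight]

lemma sum_bernoulliWeight (p : R) : ∑ A : Finset α, bernoulliWeight p A = 1 := by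
  simpa [bernoulliWeight] using (Fintype.prod_add (fun _ : α ↦ p) (fun _ ↦ 1 - p)).symm

lemma bernoulliWeight_disjSum (p : R) (B : Finset α) (C : Finset β) :
    bernoulliWeight p (B.disjSum C) = bernoulliWeight p B * bernoulliWeight p C := by
  simp only [bernoulliWeight_eq_prod, Fintype.prod_sum_type, inl_mem_disjSum, inr_mem_disjSum]

lemma sum_ite_toLeft_bernoulliWeight (p : R) (P : Finset α → Prop) [DecidablePred P] :
    ∑ A : Finset (α ⊕ β), (if P A.toLeft then bernoulliWeight p A else 0) =
      ∑ B : Finset α, if P B then bernoulliWeight p B else 0 := by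
  rw [← sumEquiv.symm.toEquiv.sum_comp, Fintype.sum_prod_type]
  simp only [OrderIso.coe_toEquiv, sumEquiv_symm_apply, toLeft_disjSum, bernoulliWeight_disjSum,
    ← ite_zero_mul, ← Finset.mul_sum, sum_bernoulliWeight, mul_one]

lemma sum_ite_nonempty_bernoulliWeight (p : R) :
    ∑ B : Finset α, (if B.Nonempty then bernoulliWeight p B else 0) =
      1 - (1 - p) ^ Fintype.card α := by
  calc ∑ B : Finset α, (if B.Nonempty then bernoulliWeight p B else 0)
      = ∑ B : Finset α, (bernoulliWeight p B - if ∅ = B then bernoulliWeight p B else 0) := by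
        refine sum_congr rfl fun B _ ↦ ?_
        rcases B.eq_empty_or_nonempty with rfl | hB
        · simp
        · simp [hB, hB.ne_empty.symm]
    _ = 1 - (1 - p) ^ Fintype.card α := by
        rw [sum_sub_distrib, sum_bernoulliWeight, sum_ite_eq]
        simp [bernoulliWeight]

end BernoulliWeight

section Sigma

variable {R : Type*} [CommRing R] {ι : Type*} {κ : ι → Type*} [Fintype ι] [DecidableEq ι]
  [∀ i, Fintype (κ i)] [∀ i, DecidableEq (κ i)]

@[simps]
def finsetSigmaEquiv : (∀ i, Finset (κ i)) ≃ Finset (Σ i, κ i) where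
  toFun t := univ.sigma t
  invFun A i := {j | ⟨i, j⟩ ∈ A}
  left_inv t := by ext; simp
  right_inv A := by ext ⟨i, j⟩; simp

lemma bernoulliWeight_univ_sigma (p : R) (t : ∀ i, Finset (κ i)) :
    bernoulliWeight p (univ.sigma t) = ∏ i, bernoulliWeight p (t i) := by
  simp only [bernoulliWeight_eq_prod, Fintype.prod_sigma, mem_sigma, mem_univ, true_and]

lemma sum_ite_forall_exists_mem_bernoulliWeight (p : R) :
    ∑ A : Finset (Σ i, κ i), (if ∀ i, ∃ j, ⟨i, j⟩ ∈ A then bernoulliWeight p A else 0) =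
      ∏ i, (1 - (1 - p) ^ Fintype.card (κ i)) := by
  rw [← finsetSigmaEquiv.sum_comp]
  simp only [finsetSigmaEquiv_apply, mem_sigma, mem_univ, true_and, bernoulliWeight_univ_sigma]
  simp_rw [← Fintype.prod_ite_zero]
  rw [← prod_congr rfl fun i _ ↦ sum_ite_nonempty_bernoulliWeight (α := κ i) p, Fintype.prod_sum]
  exact Fintype.sum_congr _ _ fun t ↦ prod_congr rfl fun i _ ↦ if_congr Iff.rfl rfl rfl

lemma sum_ite_forall_exists_mem_toLeft_bernoulliWeight {β : Type*} [Fintype β] [DecidableEq β]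
    (p : R) :
    ∑ A : Finset ((Σ i, κ i) ⊕ β),
        (if ∀ i, ∃ j, ⟨i, j⟩ ∈ A.toLeft then bernoulliWeight p A else 0) =
      ∏ i, (1 - (1 - p) ^ Fintype.card (κ i)) := by
  rw [sum_ite_toLeft_bernoulliWeight p fun B : Finset (Σ i, κ i) ↦ ∀ i, ∃ j, ⟨i, j⟩ ∈ B,
    sum_ite_forall_exists_mem_bernoulliWeight]

end Sigma

namespace SimpleGraph

lemma card_connectedComponent_eq_one_iff {V : Type*} {G : SimpleGraph V} :
    Nat.card G.ConnectedComponent = 1 ↔ G.Connected := by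
  rw [Nat.card_eq_one_iff_unique, connected_iff]
  refine and_congr ⟨fun _ u v ↦ ConnectedComponent.exact (Subsingleton.elim _ _),
    Preconnected.subsingleton_connectedComponent⟩
    ⟨fun ⟨c⟩ ↦ ?_, fun ⟨v⟩ ↦ ⟨G.connectedComponentMk v⟩⟩
  obtain ⟨v, -⟩ := c.exists_rep
  exact ⟨v⟩

lemma pathGraph_le_iff {N : ℕ} {H : SimpleGraph (Fin N)} :
    pathGraph N ≤ H ↔ ∀ i (hi : i + 1 < N), H.Adj ⟨i, by omega⟩ ⟨i + 1, hi⟩ := by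
  refine ⟨fun h i hi ↦ h (pathGraph_adj.2 (Or.inl rfl)), fun h ⟨u, hu⟩ ⟨v, hv⟩ huv ↦ ?_⟩
  rcases pathGraph_adj.1 huv with rfl | rfl
  · exact h u hv
  · exact (h v hu).symm

lemma connected_iff_pathGraph_le {N : ℕ} [NeZero N] {H : SimpleGraph (Fin N)}
    (hH : H ≤ pathGraph N) : H.Connected ↔ pathGraph N ≤ H := by
  refine ⟨fun hconn ↦ pathGraph_le_iff.2 fun i hi ↦ ?_, fun h ↦ ?_⟩
  · -- Without the edge `{i, i + 1}`, no edge of `H` crosses the cut `{0, …, i}` | `{i + 1, …}`.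
    by_contra hcut
    have adj_preserves : ∀ u v, H.Adj u v → ((u : ℕ) ≤ i ↔ (v : ℕ) ≤ i) := by
      rintro ⟨u, hu⟩ ⟨v, hv⟩ huv
      by_contra hcross
      rcases pathGraph_adj.1 (hH huv) with rfl | rfl
      · obtain rfl : u = i := by simp at hcross; omega
        exact hcut huv
      · obtain rfl : v = i := by simp at hcross; omega
        exact hcut huv.symm
    have walk_preserves : ∀ {u v} (w : H.Walk u v), ((u : ℕ) ≤ i ↔ (v : ℕ) ≤ i) := by
      intro u v w
      induction w with
      | nil => rfl
      | cons huv _ ih => exact (adj_preserves _ _ huv).trans ih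
    obtain ⟨w⟩ := hconn ⟨i, by omega⟩ ⟨i + 1, hi⟩
    simpa using walk_preserves w
  · obtain ⟨M, rfl⟩ := Nat.exists_eq_succ_of_ne_zero (NeZero.ne N)
    exact (pathGraph_connected M).mono h

end SimpleGraph

namespace Multigraph

variable {V : Type} (G : Multigraph V) (A : Finset G.Edge)

lemma toSimple_adj {u v : V} : (G.toSimple A).Adj u v ↔ u ≠ v ∧ ∃ e ∈ A, G.inc e = s(u, v) := by
  simp [toSimple, Sym2.eq_swap]

lemma comps_eq_one_iff : G.comps A = 1 ↔ (G.toSimple A).Connected :=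
  SimpleGraph.card_connectedComponent_eq_one_iff

lemma reliability_eq_sum_bernoulliWeight (p : ℝ) :
    G.reliability p = ∑ A, if G.comps A = 1 then bernoulliWeight p A else 0 := by
  simp [reliability, bernoulliWeight, card_compl]

end Multigraph

lemma prod_range_ite_even {M : Type*} [CommMonoid M] (a b : M) (N : ℕ) :
    ∏ i ∈ range N, (if Even i then a else a * b) = a ^ N * b ^ (N / 2) := by
  have h_odd : #{i ∈ range N | ¬Even i} = N / 2 := by
    simpa [Nat.dvd_iff_mod_eq_zero, Nat.even_add_one, ← Nat.even_iff] using Nat.card_multiples N 2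
  calc ∏ i ∈ range N, (if Even i then a else a * b)
      = (∏ i ∈ range N, a) * ∏ i ∈ range N, if Even i then 1 else b := by
        rw [← prod_mul_distrib]
        exact prod_congr rfl fun i _ ↦ by split_ifs <;> simp
    _ = a ^ N * b ^ (N / 2) := by
        rw [prod_ite, prod_const_one, prod_const, prod_const, card_range, h_odd, one_mul]

open Multigraph SimpleGraph

section Grig

variable (n : ℕ) (A : Finset (grig n).Edge)

lemma grig_exists_eq_inl_of_inc_eq {e : (grig n).Edge} {u v : Fin (2 ^ n)} (hne : u ≠ v)
    (he : (grig n).inc e = s(u, v)) : ∃ i j, e = Sum.inl ⟨i, j⟩ := by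
  rcases e with ⟨i, j⟩ | w | j
  · exact ⟨i, j, rfl⟩
  all_goals
    simp only [grig, Sym2.eq_iff] at he
    rcases he with ⟨rfl, rfl⟩ | ⟨rfl, rfl⟩ <;> exact absurd rfl hne

lemma grig_toSimple_le_pathGraph : (grig n).toSimple A ≤ pathGraph (2 ^ n) := by
  intro u v huv
  obtain ⟨hne, e, -, he⟩ := (toSimple_adj _ _).1 huv
  obtain ⟨i, j, rfl⟩ := grig_exists_eq_inl_of_inc_eq n hne he
  simp only [grig, Sym2.eq_iff] at he
  rcases he with ⟨rfl, rfl⟩ | ⟨rfl, rfl⟩ <;> simp [pathGraph_adj, leftV, rightV]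

lemma grig_toSimple_adj_succ {m : ℕ} (hm : m + 1 < 2 ^ n) :
    ((grig n).toSimple A).Adj ⟨m, by omega⟩ ⟨m + 1, hm⟩ ↔
      ∃ j : Fin (if Even m then 1 else 2), ⟨⟨m, by omega⟩, j⟩ ∈ A.toLeft := by
  rw [toSimple_adj]
  refine ⟨fun ⟨hne, e, heA, he⟩ ↦ ?_, fun ⟨j, hj⟩ ↦ ⟨by simp, _, mem_toLeft.1 hj, rfl⟩⟩
  obtain ⟨i, j, rfl⟩ := grig_exists_eq_inl_of_inc_eq n hne he
  obtain rfl : i = ⟨m, by omega⟩ := by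
    simp [grig, leftV, rightV, Fin.ext_iff] at he ⊢
    omega
  exact ⟨j, mem_toLeft.2 heA⟩

lemma grig_comps_eq_one_iff :
    (grig n).comps A = 1 ↔ ∀ i, ∃ j, ⟨i, j⟩ ∈ A.toLeft := by
  rw [comps_eq_one_iff, connected_iff_pathGraph_le (grig_toSimple_le_pathGraph n A),
    pathGraph_le_iff]
  exact ⟨fun h i ↦ (grig_toSimple_adj_succ n A _).1 (h i (by omega)),
    fun h m hm ↦ (grig_toSimple_adj_succ n A hm).2 (h ⟨m, by omega⟩)⟩

lemma reliability_grig_eq_prod_range (p : ℝ) :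
    (grig n).reliability p = ∏ i ∈ range (2 ^ n - 1), if Even i then p else p * (2 - p) := by
  rw [reliability_eq_sum_bernoulliWeight,
    ← Fin.prod_univ_eq_prod_range fun i ↦ if Even i then p else p * (2 - p)]
  have h_gap_factor : ∀ i : Fin (2 ^ n - 1),
      1 - (1 - p) ^ Fintype.card (Fin (if Even i.val then 1 else 2)) =
        if Even i.val then p else p * (2 - p) := by
    intro i; split_ifs <;> simp only [Fintype.card_fin] <;> ring
  rw [← Fintype.prod_congr _ _ h_gap_factor,
    ← sum_ite_forall_exists_mem_toLeft_bernoulliWeight (β := Fin (2 ^ n) ⊕ Fin 4)]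
  -- `congr` reconciles the two `Decidable` instances of the equivalent conditions.
  exact sum_congr rfl fun A _ ↦ by congr 1; exact propext (grig_comps_eq_one_iff n A)

end Grig

/-- For each `n ≥ 1`, the reliability polynomial of the Schreier
graph `Γ_n` of the Grigorchuk group is
`R(Γ_n, p) = p^(2^n - 1) · (2 - p)^(2^(n-1) - 1)`. -/
theorem reliability_grig (n : ℕ) (hn : 1 ≤ n) (p : ℝ) :
    (grig n).reliability p = p ^ (2 ^ n - 1) * (2 - p) ^ (2 ^ (n - 1) - 1) := by
  have h_odd_gaps : (2 ^ n - 1) / 2 = 2 ^ (n - 1) - 1 := by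
    obtain ⟨k, rfl⟩ : ∃ k, n = k + 1 := ⟨n - 1, by omega⟩
    rw [Nat.add_sub_cancel, pow_succ]
    omega
  rw [reliability_grig_eq_prod_range, prod_range_ite_even, h_odd_gaps]
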